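/- Let N ≥ 1 be an integer, w ≥ 0 an integer, ω a Dirichlet character modulo N, τ ∈ ℋ, and s ∈ ℂ with w + 2 Re(s) > 2. Let γ = [[a,b],[c,d]] ∈ SL₂(ℤ) with N | c. Then E_{w,N}(γτ, s, ω) = ω(d)^{−1} (cτ+d)^w (|cτ+d|²)^s E_{w,N}(τ, s, ω), where γτ = (aτ+b)/(cτ+d). -/

import Mathlib

open Complex

noncomputable section

/-- The Eisenstein series `E_{w,N}(τ,s,ω) = Σ'_{(m,n)} ω(n)/((Nmτ+n)^w |Nmτ+n|^{2s})`. -/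
def EwN (N : ℕ) (w : ℕ) (ω : DirichletCharacter ℂ N) (τ : ℂ) (s : ℂ) : ℂ :=
  ∑' p : {q : ℤ × ℤ // q ≠ 0},
    ω ((p.1.2 : ℤ) : ZMod N) /
      (((N : ℂ) * (p.1.1 : ℂ) * τ + (p.1.2 : ℂ)) ^ w *
        ((Complex.normSq ((N : ℂ) * (p.1.1 : ℂ) * τ + (p.1.2 : ℂ)) : ℂ)) ^ s)

end

/-! With `c = N k` and `j = c τ + d`, one has `N m (γ τ) + n = (N m' τ + n') / j` for
`(m', n') = (m, n) [[a, N b], [k, d]]`, a unimodular substitution permuting `ℤ² ∖ {0}`; moreover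
`n' ≡ n d (mod N)`. Hence the `(m, n)` term of `E(γ τ)` is `ω(d)⁻¹ j ^ w |j| ^ (2 s)` times the
`(m', n')` term of `E(τ)`, and the identity follows by reindexing the sum. -/

def rowMulAddEquiv (a b c d : ℤ) (h : a * d - b * c = 1) : ℤ × ℤ ≃+ ℤ × ℤ where
  toFun p := (p.1 * a + p.2 * c, p.1 * b + p.2 * d)
  invFun p := (p.1 * d - p.2 * c, -(p.1 * b) + p.2 * a)
  left_inv := by
    rintro ⟨m, n⟩
    ext
    · linear_combination m * h
    · linear_combination n * h
  right_inv := by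
    rintro ⟨m, n⟩
    ext
    · linear_combination m * h
    · linear_combination n * h
  map_add' p q := by
    ext <;> simp only [Prod.fst_add, Prod.snd_add] <;> ring

theorem tsum_ne_zero_comp_addEquiv {M M' α : Type*} [AddZeroClass M] [AddZeroClass M']
    [AddCommMonoid α] [TopologicalSpace α] (e : M ≃+ M') (f : M' → α) :
    ∑' p : {q : M // q ≠ 0}, f (e p) = ∑' p : {q : M' // q ≠ 0}, f p :=
  (e.toEquiv.subtypeEquiv fun _ => (EmbeddingLike.map_ne_zero_iff (f := e)).symm).tsum_eq
    fun p : {q : M' // q ≠ 0} => f p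

theorem isUnit_intCast_of_mul_sub_mul_eq_one {N : ℕ} {a b c d : ℤ} (h : a * d - b * c = 1)
    (hc : (N : ℤ) ∣ c) : IsUnit (d : ZMod N) := by
  have hc' : (c : ZMod N) = 0 := (ZMod.intCast_zmod_eq_zero_iff_dvd c N).mpr hc
  have had : (a : ZMod N) * d = 1 := by
    simpa [hc'] using congrArg (Int.cast : ℤ → ZMod N) h
  exact IsUnit.of_mul_eq_one_right _ had

theorem mul_moebius_add {u n a b c d τ : ℂ} (hj : c * τ + d ≠ 0) :
    u * ((a * τ + b) / (c * τ + d)) + n =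
      ((u * a + n * c) * τ + (u * b + n * d)) / (c * τ + d) := by
  rw [eq_div_iff hj, add_mul, mul_assoc u, div_mul_cancel₀ _ hj]
  ring

noncomputable def weightFactor (w : ℕ) (s z : ℂ) : ℂ := z ^ w * (normSq z : ℂ) ^ s

theorem weightFactor_div (w : ℕ) (s z j : ℂ) :
    weightFactor w s (z / j) = weightFactor w s z / weightFactor w s j := by
  rw [weightFactor, weightFactor, weightFactor, div_pow, normSq_div, ofReal_div,
    div_cpow_ofReal_nonneg (normSq_nonneg z) (normSq_nonneg j), div_mul_div_comm]

noncomputable def EwNSummand (N w : ℕ) (ω : DirichletCharacter ℂ N) (s τ : ℂ) (p : ℤ × ℤ) :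
    ℂ :=
  ω (p.2 : ZMod N) / weightFactor w s (N * p.1 * τ + p.2)

theorem EwN_eq_tsum_EwNSummand (N w : ℕ) (ω : DirichletCharacter ℂ N) (τ s : ℂ) :
    EwN N w ω τ s = ∑' p : {q : ℤ × ℤ // q ≠ 0}, EwNSummand N w ω s τ p :=
  rfl

theorem EwNSummand_moebius {N w : ℕ} (ω : DirichletCharacter ℂ N) (s : ℂ) {τ : ℂ}
    {a b c d k : ℤ} (hdet : a * d - b * c = 1) (hk : c = N * k) (hj : (c : ℂ) * τ + d ≠ 0)
    (m n : ℤ) :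
    EwNSummand N w ω s ((a * τ + b) / (c * τ + d)) (m, n) =
      (ω (d : ZMod N))⁻¹ * weightFactor w s (c * τ + d) *
        EwNSummand N w ω s τ (m * a + n * k, m * (N * b) + n * d) := by
  have hωd : ω (d : ZMod N) ≠ 0 :=
    ((isUnit_intCast_of_mul_sub_mul_eq_one hdet ⟨k, hk⟩).map ω).ne_zero
  have hω : ω ((m * (N * b) + n * d : ℤ) : ZMod N) = ω (n : ZMod N) * ω (d : ZMod N) := by
    rw [← map_mul]
    congr 1
    push_cast
    rw [ZMod.natCast_self]
    ring
  have hz : (N : ℂ) * m * ((a * τ + b) / (c * τ + d)) + n =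
      ((N : ℂ) * ((m * a + n * k : ℤ) : ℂ) * τ + ((m * (N * b) + n * d : ℤ) : ℂ)) /
        (c * τ + d) := by
    rw [mul_moebius_add hj, hk]
    push_cast
    ring
  simp only [EwNSummand]
  rw [hz, weightFactor_div, hω]
  field_simp

theorem EwN_transformation_general
    (N : ℕ) (w : ℕ) (ω : DirichletCharacter ℂ N)
    (τ : UpperHalfPlane) (s : ℂ)
    (γ : Matrix.SpecialLinearGroup (Fin 2) ℤ) (hc : (N : ℤ) ∣ γ.1 1 0) :
    EwN N w ω
        ((((γ.1 0 0 : ℤ) : ℂ) * (τ : ℂ) + ((γ.1 0 1 : ℤ) : ℂ)) /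
          (((γ.1 1 0 : ℤ) : ℂ) * (τ : ℂ) + ((γ.1 1 1 : ℤ) : ℂ))) s
      = (ω ((γ.1 1 1 : ℤ) : ZMod N))⁻¹ *
          (((γ.1 1 0 : ℤ) : ℂ) * (τ : ℂ) + ((γ.1 1 1 : ℤ) : ℂ)) ^ w *
          ((Complex.normSq (((γ.1 1 0 : ℤ) : ℂ) * (τ : ℂ) + ((γ.1 1 1 : ℤ) : ℂ)) : ℂ)) ^ s *
          EwN N w ω (τ : ℂ) s := by
  obtain ⟨k, hk⟩ := hc
  have hdet : γ.1 0 0 * γ.1 1 1 - γ.1 0 1 * γ.1 1 0 = 1 := by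
    rw [← Matrix.det_fin_two]
    exact γ.det_coe
  have hj : ((γ.1 1 0 : ℤ) : ℂ) * (τ : ℂ) + ((γ.1 1 1 : ℤ) : ℂ) ≠ 0 := by
    simpa [UpperHalfPlane.denom] using UpperHalfPlane.denom_ne_zero γ τ
  let e := rowMulAddEquiv (γ.1 0 0) (N * γ.1 0 1) k (γ.1 1 1)
    (by linear_combination hdet + γ.1 0 1 * hk)
  rw [EwN_eq_tsum_EwNSummand, EwN_eq_tsum_EwNSummand,
    ← tsum_ne_zero_comp_addEquiv e (EwNSummand N w ω s τ), mul_assoc _ (_ ^ w), ← tsum_mul_left]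
  exact tsum_congr fun p => EwNSummand_moebius ω s hdet hk hj p.1.1 p.1.2

/-- for `γ = [[a,b],[c,d]] ∈ SL₂(ℤ)` with `N ∣ c`,
`E_{w,N}(γτ, s, ω) = ω(d)⁻¹ (cτ+d)^w (|cτ+d|²)^s E_{w,N}(τ, s, ω)`
where `γτ = (aτ+b)/(cτ+d)`. -/
theorem EwN_transformation
    (N : ℕ) [NeZero N] (w : ℕ) (ω : DirichletCharacter ℂ N)
    (τ : UpperHalfPlane) (s : ℂ) (hs : (w : ℝ) + 2 * s.re > 2)
    (γ : Matrix.SpecialLinearGroup (Fin 2) ℤ) (hc : (N : ℤ) ∣ γ.1 1 0) :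
    EwN N w ω
        ((((γ.1 0 0 : ℤ) : ℂ) * (τ : ℂ) + ((γ.1 0 1 : ℤ) : ℂ)) /
          (((γ.1 1 0 : ℤ) : ℂ) * (τ : ℂ) + ((γ.1 1 1 : ℤ) : ℂ))) s
      = (ω ((γ.1 1 1 : ℤ) : ZMod N))⁻¹ *
          (((γ.1 1 0 : ℤ) : ℂ) * (τ : ℂ) + ((γ.1 1 1 : ℤ) : ℂ)) ^ w *
          ((Complex.normSq (((γ.1 1 0 : ℤ) : ℂ) * (τ : ℂ) + ((γ.1 1 1 : ℤ) : ℂ)) : ℂ)) ^ s *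
          EwN N w ω (τ : ℂ) s :=
  EwN_transformation_general N w ω τ s γ hc
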